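/- arXiv:math/0301173 — 5 statements merged into one kernel-verified Lean document; each statement's English description precedes it below -/
import Mathlib

section
/- Let F be a field and let H1 and H2 be groups. Let τ1 : H1 → Aut_F(W1) be an irreducible finite-dimensional linear representation of H1 over F, and let τ2 : H2 → Aut_F(W2) be an absolutely irreducible finite-dimensional linear representation of H2 over F. Then the linear representation of the product group H1 × H2 on the F-vector space Hom_F(W1, W2), given by (h1, h2) · φ = τ2(h2) ∘ φ ∘ τ1(h1)⁻¹, is irreducible. -/
open Function Module
open scoped TensorProduct

universe u v w x y

/-- A linear representation `τ : H →* Aut_F(W)` is *irreducible* if `W ≠ 0` and the only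
`H`-invariant `F`-subspaces of `W` are `0` and `W`. -/
def RepIsIrreducible {F : Type u} [Field F] {H : Type v} [Group H]
    {W : Type w} [AddCommGroup W] [Module F W] (τ : Representation F H W) : Prop :=
  Nontrivial W ∧
    ∀ p : Submodule F W, (∀ h : H, ∀ w ∈ p, τ h w ∈ p) → p = ⊥ ∨ p = ⊤

/-- A linear representation is *absolutely irreducible* if it remains irreducible after
extension of scalars to every field extension `E` of `F`. -/
def RepIsAbsolutelyIrreducible {F : Type u} [Field F] {H : Type v} [Group H]
    {W : Type w} [AddCommGroup W] [Module F W] (τ : Representation F H W) : Prop :=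
  ∀ (E : Type u) [Field E] [Algebra F E],
    Nontrivial (E ⊗[F] W) ∧
      ∀ p : Submodule E (E ⊗[F] W),
        (∀ h : H, ∀ x ∈ p, LinearMap.baseChange E (τ h) x ∈ p) → p = ⊥ ∨ p = ⊤

/-
Over an algebraic closure `E` of `F`, the base change of `τ2` is irreducible, so by Burnside's
theorem the operators `τ2 h` span `End_E (E ⊗ W2)`; as this space has the same dimension as
`End_F W2`, they already span `End_F W2`. Hence an invariant subspace `p` of `Hom_F(W1, W2)` is
stable under left composition with every endomorphism of `W2`. The common kernel `K` of `p` is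
`τ1`-invariant, so `K = W1` (and `p = 0`) or `K = 0`. In the latter case a basis
`φ 1, …, φ n` of `p` embeds `W1` into `W2ⁿ`, every `θ : W1 → W2` factors through this
embedding as `θ = ∑ ψ i ∘ φ i`, and so `θ ∈ p`.
-/

/- Burnside's theorem: by Schur's lemma `End_A V = E`, so every `E`-linear endomorphism is
`End_A V`-linear, and the Jacobson density theorem realises it by an element of `A`. -/
theorem Algebra.lsmul_surjective_of_isAlgClosed {E A V : Type*} [Field E] [IsAlgClosed E]
    [Ring A] [Algebra E A] [AddCommGroup V] [Module E V] [Module A V] [IsScalarTower E A V]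
    [IsSimpleModule A V] [FiniteDimensional E V] :
    Surjective (Algebra.lsmul E E V : A →ₐ[E] Module.End E V) := by
  have hschur := IsSimpleModule.algebraMap_end_bijective_of_isAlgClosed (A := A) (V := V) E
  have : Module.Finite (Module.End A V) V := Module.Finite.of_restrictScalars_finite E _ V
  intro f
  let g : Module.End (Module.End A V) V :=
    { toFun := f
      map_add' := f.map_add
      map_smul' := fun b v => by
        obtain ⟨c, rfl⟩ := hschur.2 b
        exact f.map_smul c v }
  obtain ⟨a, ha⟩ := Module.Finite.toModuleEnd_moduleEnd_surjective (R := A) (M := V) g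
  exact ⟨a, LinearMap.ext fun v => congr($ha v)⟩

theorem RepIsIrreducible.isIrreducible {F H W : Type*} [Field F] [Group H]
    [AddCommGroup W] [Module F W] {τ : Representation F H W} (hτ : RepIsIrreducible τ) :
    τ.IsIrreducible where
  exists_pair_ne := by
    have := hτ.1
    exact ⟨⊥, ⊤, fun h => bot_ne_top congr(($h).toSubmodule)⟩
  eq_bot_or_eq_top σ := by
    rcases hτ.2 σ.toSubmodule fun h _ hw => σ.apply_mem_toSubmodule h hw with h | h
    · exact .inl (Subrepresentation.ext h)
    · exact .inr (Subrepresentation.ext h)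

theorem Representation.span_range_eq_top_of_isAlgClosed {E G V : Type*} [Field E] [IsAlgClosed E]
    [Monoid G] [AddCommGroup V] [Module E V] [FiniteDimensional E V]
    (ρ : Representation E G V) [ρ.IsIrreducible] :
    Submodule.span E (Set.range ρ) = ⊤ := by
  rw [eq_top_iff]
  rintro f -
  -- The library instance `IsScalarTower E E[G] ρ.asModule` is stated over another (defeq)
  -- `Module E ρ.asModule` instance than the one elaborated here, so it is passed by hand.
  obtain ⟨a, rfl⟩ := @Algebra.lsmul_surjective_of_isAlgClosed E (MonoidAlgebra E G) ρ.asModule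
    _ _ _ _ _ _ _ ⟨fun t a v => smul_assoc t a v⟩ _ _ f
  have : Algebra.lsmul E E ρ.asModule a = ρ.asAlgebraHom a := rfl
  rw [this, ← Finsupp.range_linearCombination]
  exact ⟨a.coeff, by
    rw [Finsupp.linearCombination_apply, Representation.asAlgebraHom_def,
      MonoidAlgebra.lift_apply]⟩

theorem Submodule.span_eq_top_of_span_image_eq_top {F E M N : Type*} [Field F] [Field E]
    [Algebra F E] [AddCommGroup M] [Module F M] [FiniteDimensional F M] [AddCommMonoid N]
    [Module F N] [Module E N] [IsScalarTower F E N] (β : M →ₗ[F] N)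
    (hdim : finrank F M ≤ finrank E N) {s : Set M} (hs : span E (β '' s) = ⊤) :
    span F s = ⊤ := by
  set S := span F s
  let b := Module.finBasis F S
  let v : Fin (finrank F S) → M := S.subtype ∘ b
  have hv : span F (Set.range v) = S := by
    rw [Set.range_comp, ← Submodule.map_span, b.span_eq, Submodule.map_top, range_subtype]
  have hle : span E (β '' s) ≤ span E (Set.range (β ∘ v)) := by
    rw [span_le]
    rintro _ ⟨x, hx, rfl⟩
    have hx' : β x ∈ span F (β '' Set.range v) := by
      rw [← Submodule.map_span, hv]
      exact mem_map_of_mem (subset_span hx)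
    rw [Set.range_comp]
    exact span_le_restrictScalars F E _ hx'
  rw [hs, top_le_iff] at hle
  have hcard : finrank E N ≤ finrank F S := by
    have := finrank_range_le_card (R := E) (β ∘ v)
    rwa [Set.finrank, hle, finrank_top, Fintype.card_fin] at this
  exact eq_top_of_finrank_eq (le_antisymm S.finrank_le (hdim.trans hcard))

theorem RepIsAbsolutelyIrreducible.span_range_eq_top {F H W : Type*} [Field F] [Group H]
    [AddCommGroup W] [Module F W] [FiniteDimensional F W] {τ : Representation F H W}
    (hτ : RepIsAbsolutelyIrreducible τ) :
    Submodule.span F (Set.range τ) = ⊤ := by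
  let E := AlgebraicClosure F
  let ρ : Representation E H (E ⊗[F] W) := (Module.End.baseChangeHom F E W).toMonoidHom.comp τ
  have : ρ.IsIrreducible := RepIsIrreducible.isIrreducible (hτ E)
  refine Submodule.span_eq_top_of_span_image_eq_top (E := E)
    (LinearMap.baseChangeHom F E W W) ?_ ?_
  · rw [finrank_linearMap, finrank_linearMap, finrank_baseChange]
  · rw [← Set.range_comp]
    exact ρ.span_range_eq_top_of_isAlgClosed

theorem Submodule.eq_top_of_comp_mem_of_iInf_ker_eq_bot {F V W : Type*} [Field F]
    [AddCommGroup V] [Module F V] [FiniteDimensional F V]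
    [AddCommGroup W] [Module F W] [FiniteDimensional F W] (p : Submodule F (V →ₗ[F] W))
    (hcomp : ∀ ψ : Module.End F W, ∀ φ ∈ p, ψ ∘ₗ φ ∈ p)
    (hker : ⨅ φ ∈ p, LinearMap.ker φ = ⊥) : p = ⊤ := by
  let b := Module.finBasis F p
  let Φ : V →ₗ[F] (Fin (finrank F p) → W) := LinearMap.pi fun i => (b i : V →ₗ[F] W)
  have hΦ : LinearMap.ker Φ = ⊥ := by
    rw [eq_bot_iff, ← hker]
    intro v hv
    simp only [mem_iInf, LinearMap.mem_ker]
    intro φ hφ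
    have : (LinearMap.applyₗ v).comp p.subtype = 0 :=
      b.ext fun i => congr_fun (LinearMap.mem_ker.1 hv) i
    exact congr($this ⟨φ, hφ⟩)
  obtain ⟨L, hL⟩ := Φ.exists_leftInverse_of_injective hΦ
  rw [eq_top_iff]
  rintro θ -
  have hθ :
      θ = ∑ i, (θ ∘ₗ L ∘ₗ LinearMap.single F (fun _ => W) i) ∘ₗ (b i : V →ₗ[F] W) := by
    calc θ = θ ∘ₗ L ∘ₗ Φ := by rw [hL, LinearMap.comp_id]
      _ = _ := by
        ext v
        simp [Φ, ← map_sum, Finset.univ_sum_single]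
        rfl
  rw [hθ]
  exact sum_mem fun i _ => hcomp _ _ (b i).2

theorem RepIsIrreducible.eq_bot_or_eq_top_of_comp_mem {F H V W : Type*} [Field F] [Group H]
    [AddCommGroup V] [Module F V] [FiniteDimensional F V]
    [AddCommGroup W] [Module F W] [FiniteDimensional F W] {τ : Representation F H V}
    (hτ : RepIsIrreducible τ) (p : Submodule F (V →ₗ[F] W))
    (hleft : ∀ ψ : Module.End F W, ∀ φ ∈ p, ψ ∘ₗ φ ∈ p)
    (hright : ∀ h : H, ∀ φ ∈ p, φ ∘ₗ τ h ∈ p) : p = ⊥ ∨ p = ⊤ := by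
  let K : Submodule F V := ⨅ φ ∈ p, LinearMap.ker φ
  have hK : ∀ h : H, ∀ v ∈ K, τ h v ∈ K := by
    intro h v hv
    simp only [K, Submodule.mem_iInf, LinearMap.mem_ker] at hv ⊢
    exact fun φ hφ => hv _ (hright h φ hφ)
  rcases hτ.2 K hK with hK | hK
  · exact .inr (p.eq_top_of_comp_mem_of_iInf_ker_eq_bot hleft hK)
  · refine .inl (eq_bot_iff.2 fun φ hφ => ?_)
    ext v
    have hv : v ∈ K := hK ▸ Submodule.mem_top
    simp only [K, Submodule.mem_iInf, LinearMap.mem_ker] at hv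
    exact hv φ hφ

/-- If `τ1 : H1 → Aut_F(W1)` is an irreducible finite-dimensional representation over `F` and
`τ2 : H2 → Aut_F(W2)` is an absolutely irreducible finite-dimensional representation over `F`,
then the representation of `H1 × H2` on `Hom_F(W1, W2)` given by
`(h1, h2) · φ = τ2 h2 ∘ φ ∘ τ1 h1⁻¹` is irreducible. -/
theorem hom_rep_irreducible {F : Type u} [Field F]
    {H1 : Type v} [Group H1] {H2 : Type w} [Group H2]
    {W1 : Type x} [AddCommGroup W1] [Module F W1] [FiniteDimensional F W1]
    {W2 : Type y} [AddCommGroup W2] [Module F W2] [FiniteDimensional F W2]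
    (τ1 : Representation F H1 W1) (τ2 : Representation F H2 W2)
    (hτ1 : RepIsIrreducible τ1) (hτ2 : RepIsAbsolutelyIrreducible τ2) :
    Nontrivial (W1 →ₗ[F] W2) ∧
      ∀ p : Submodule F (W1 →ₗ[F] W2),
        (∀ (h1 : H1) (h2 : H2), ∀ φ ∈ p, (τ2 h2) ∘ₗ φ ∘ₗ (τ1 h1⁻¹) ∈ p) →
          p = ⊥ ∨ p = ⊤ := by
  have : Nontrivial W1 := hτ1.1
  have : Nontrivial W2 :=
    have := (hτ2 F).1
    (TensorProduct.lid F W2).symm.toEquiv.nontrivial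
  refine ⟨inferInstance, fun p hp => hτ1.eq_bot_or_eq_top_of_comp_mem p ?_ ?_⟩
  · intro ψ φ hφ
    have hspan : Submodule.span F (Set.range τ2) ≤ p.comap (LinearMap.lcomp F W2 φ) := by
      rw [Submodule.span_le]
      rintro _ ⟨h, rfl⟩
      simpa [LinearMap.lcomp_apply', Module.End.one_eq_id] using hp 1 h φ hφ
    rw [hτ2.span_range_eq_top] at hspan
    exact hspan Submodule.mem_top
  · intro h φ hφ
    simpa [Module.End.one_eq_id] using hp h⁻¹ 1 φ hφ
end

section
/- Let F be a field and let H1 and H2 be groups. Let τ1 : H1 → Aut_F(W1) be an irreducible finite-dimensional linear representation of H1 over F, and let τ2 : H2 → Aut_F(W2) be an absolutely irreducible finite-dimensional linear representation of H2 over F. Then the tensor product representation τ1 ⊗ τ2 of H1 × H2 on W1 ⊗_F W2, given by (h1, h2) · (w1 ⊗ w2) = τ1(h1)(w1) ⊗ τ2(h2)(w2), is irreducible. -/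
open Function Module
open scoped TensorProduct

universe u v w x y

section Aux

variable {F : Type u} [Field F] {H : Type v} [Group H]
    {W : Type w} [AddCommGroup W] [Module F W]

private lemma lid_baseChange (f : W →ₗ[F] W) (x : F ⊗[F] W) :
    (TensorProduct.lid F W) (LinearMap.baseChange F f x) = f ((TensorProduct.lid F W) x) := by
  induction x using TensorProduct.induction_on with
  | zero => simp
  | tmul c v => simp
  | add a b ha hb => simp [ha, hb]

private lemma absIrr_nontrivial (τ : Representation F H W)
    (hτ : RepIsAbsolutelyIrreducible τ) : Nontrivial W := by
  haveI := (hτ F).1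
  exact (TensorProduct.lid F W).symm.toEquiv.nontrivial

private lemma absIrr_irreducible (τ : Representation F H W)
    (hτ : RepIsAbsolutelyIrreducible τ) :
    ∀ p : Submodule F W, (∀ h : H, ∀ w ∈ p, τ h w ∈ p) → p = ⊥ ∨ p = ⊤ := by
  intro p hp
  set e := TensorProduct.lid F W
  set q : Submodule F (F ⊗[F] W) := p.comap (e : F ⊗[F] W →ₗ[F] W) with hq
  have hmem : ∀ z, z ∈ q ↔ e z ∈ p := fun z => Iff.rfl
  rcases (hτ F).2 q (by
    intro h z hz
    rw [hmem] at hz ⊢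
    rw [lid_baseChange]
    exact hp h _ hz) with h1 | h1
  · left
    ext w
    simp only [Submodule.mem_bot]
    constructor
    · intro hw
      have : e.symm w ∈ q := by rw [hmem]; simpa using hw
      rw [h1, Submodule.mem_bot] at this
      have := congrArg e this
      simpa using this
    · rintro rfl; exact p.zero_mem
  · right
    ext w
    simp only [Submodule.mem_top, iff_true]
    have : e.symm w ∈ q := by rw [h1]; trivial
    rw [hmem] at this
    simpa using this

variable [FiniteDimensional F W]

omit [FiniteDimensional F W] in
private lemma one_tmul_repr (K : Type*) [Field K] [Algebra F K]
    (b : Basis (Fin (finrank F W)) F W) (v : W) (i : Fin (finrank F W)) :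
    ((b.baseChange K).repr ((1 : K) ⊗ₜ[F] v)) i = algebraMap F K (b.repr v i) := by
  rw [Basis.baseChange_repr_tmul, Algebra.algebraMap_eq_smul_one]

private lemma one_tmul_injective (K : Type*) [Field K] [Algebra F K] {v v' : W}
    (h : (1 : K) ⊗ₜ[F] v = (1 : K) ⊗ₜ[F] v') : v = v' := by
  let b := finBasis F W
  apply b.repr.injective
  ext i
  have := congrArg (fun z => ((b.baseChange K).repr z) i) h
  simp only [one_tmul_repr] at this
  exact (algebraMap F K).injective this

/-- Schur: the commutant of an absolutely irreducible representation consists of scalars. -/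
private lemma commutant_scalar (τ : Representation F H W) (hτ : RepIsAbsolutelyIrreducible τ)
    [Nontrivial W] (φ : W →ₗ[F] W) (hφ : ∀ (h : H) (v : W), φ (τ h v) = τ h (φ v)) :
    ∃ c : F, ∀ v, φ v = c • v := by
  set K := AlgebraicClosure F
  haveI : Nontrivial (K ⊗[F] W) := (hτ K).1
  obtain ⟨c, hc⟩ := Module.End.exists_eigenvalue (φ.baseChange K)
  have key : Module.End.eigenspace (φ.baseChange K) c = ⊤ := by
    rcases (hτ K).2 (Module.End.eigenspace (φ.baseChange K) c) (by
      intro h z hz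
      rw [Module.End.mem_eigenspace_iff] at hz ⊢
      have hφ' : φ ∘ₗ τ h = τ h ∘ₗ φ := LinearMap.ext (hφ h)
      have hcomp : φ.baseChange K ∘ₗ (τ h).baseChange K
          = (τ h).baseChange K ∘ₗ φ.baseChange K := by
        rw [← LinearMap.baseChange_comp, ← LinearMap.baseChange_comp, hφ']
      calc (φ.baseChange K) ((τ h).baseChange K z)
          = (τ h).baseChange K ((φ.baseChange K) z) :=
            congrFun (congrArg DFunLike.coe hcomp) z
        _ = c • (τ h).baseChange K z := by rw [hz, map_smul]) with h1 | h1
    · exact absurd h1 hc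
    · exact h1
  have heig : ∀ z : K ⊗[F] W, (φ.baseChange K) z = c • z := by
    intro z
    have : z ∈ Module.End.eigenspace (φ.baseChange K) c := key ▸ Submodule.mem_top
    rwa [Module.End.mem_eigenspace_iff] at this
  let b := finBasis F W
  have hn : 0 < finrank F W := finrank_pos
  let i₀ : Fin (finrank F W) := ⟨0, hn⟩
  have hmap : algebraMap F K (b.repr (φ (b i₀)) i₀) = c := by
    have h1 : (1:K) ⊗ₜ[F] (φ (b i₀)) = c • ((1:K) ⊗ₜ[F] (b i₀)) := by
      rw [← LinearMap.baseChange_tmul]; exact heig _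
    have h2 := congrArg (fun z => ((b.baseChange K).repr z) i₀) h1
    simp only [one_tmul_repr, map_smul, Finsupp.smul_apply, smul_eq_mul] at h2
    rw [Basis.repr_self, Finsupp.single_eq_same, map_one, mul_one] at h2
    exact h2
  refine ⟨b.repr (φ (b i₀)) i₀, fun v => ?_⟩
  apply one_tmul_injective K (F := F)
  have h3 : (1:K) ⊗ₜ[F] (φ v) = c • ((1:K) ⊗ₜ[F] v) := by
    rw [← LinearMap.baseChange_tmul]; exact heig _
  rw [h3, TensorProduct.tmul_smul, ← hmap, algebraMap_smul]

end Aux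

/-- If `τ1 : H1 → Aut_F(W1)` is an irreducible finite-dimensional representation over `F` and
`τ2 : H2 → Aut_F(W2)` is an absolutely irreducible finite-dimensional representation over `F`,
then the tensor product representation `τ1 ⊗ τ2` of `H1 × H2` on `W1 ⊗[F] W2`, given by
`(h1, h2) · (w1 ⊗ w2) = τ1 h1 w1 ⊗ τ2 h2 w2`, is irreducible. -/
theorem tensor_rep_irreducible {F : Type u} [Field F]
    {H1 : Type v} [Group H1] {H2 : Type w} [Group H2]
    {W1 : Type x} [AddCommGroup W1] [Module F W1] [FiniteDimensional F W1]
    {W2 : Type y} [AddCommGroup W2] [Module F W2] [FiniteDimensional F W2]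
    (τ1 : Representation F H1 W1) (τ2 : Representation F H2 W2)
    (hτ1 : RepIsIrreducible τ1) (hτ2 : RepIsAbsolutelyIrreducible τ2) :
    Nontrivial (W1 ⊗[F] W2) ∧
      ∀ p : Submodule F (W1 ⊗[F] W2),
        (∀ (h1 : H1) (h2 : H2), ∀ x ∈ p, TensorProduct.map (τ1 h1) (τ2 h2) x ∈ p) →
          p = ⊥ ∨ p = ⊤ := by
  classical
  obtain ⟨hW1nt, hirr1⟩ := hτ1
  haveI := hW1nt
  haveI hW2nt : Nontrivial W2 := absIrr_nontrivial τ2 hτ2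
  have hirr2 := absIrr_irreducible τ2 hτ2
  haveI hTnt : Nontrivial (W1 ⊗[F] W2) := by
    have h1 : 0 < finrank F W1 := finrank_pos
    have h2 : 0 < finrank F W2 := finrank_pos
    exact ⟨((finBasis F W1).tensorProduct (finBasis F W2)) (⟨0, h1⟩, ⟨0, h2⟩), 0,
      Basis.ne_zero _ _⟩
  refine ⟨hTnt, ?_⟩
  intro p hp
  by_cases hpbot : p = ⊥
  · exact Or.inl hpbot
  right
  set m := finrank F W1 with hm
  set b := finBasis F W1 with hb
  -- the coordinate maps relative to the basis `b`
  set coord : Fin m → (W1 ⊗[F] W2 →ₗ[F] W2) :=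
    fun j => (TensorProduct.lid F W2).toLinearMap ∘ₗ LinearMap.rTensor W2 (b.coord j)
    with hcoorddef
  have coord_tmul : ∀ j (w : W1) (z : W2), coord j (w ⊗ₜ[F] z) = b.repr w j • z := by
    intro j w z
    simp [hcoorddef, Basis.coord_apply]
  -- reconstruction of an element from its coordinates
  have recon : ∀ z : W1 ⊗[F] W2, ∑ j, b j ⊗ₜ[F] coord j z = z := by
    intro z
    induction z using TensorProduct.induction_on with
    | zero => simp
    | tmul w u =>
      simp only [coord_tmul]
      calc ∑ j, b j ⊗ₜ[F] (b.repr w j • u)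
          = ∑ j, (b.repr w j • b j) ⊗ₜ[F] u := by
            simp [TensorProduct.tmul_smul, TensorProduct.smul_tmul']
        _ = (∑ j, b.repr w j • b j) ⊗ₜ[F] u := by rw [TensorProduct.sum_tmul]
        _ = w ⊗ₜ[F] u := by
            congr 1
            have := b.sum_equivFun w
            simpa [Basis.equivFun_apply] using this
    | add a c ha hc => simp only [map_add, TensorProduct.tmul_add,
        Finset.sum_add_distrib, ha, hc]
  -- coordinates intertwine the `H2`-action
  have coord_map : ∀ (g : W2 →ₗ[F] W2) (j) (z : W1 ⊗[F] W2),
      coord j (TensorProduct.map LinearMap.id g z) = g (coord j z) := by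
    intro g j z
    induction z using TensorProduct.induction_on with
    | zero => simp
    | tmul w u => simp [coord_tmul, TensorProduct.map_tmul]
    | add a c ha hc => simp [ha, hc]
  have coord_map1 : ∀ (h : H2) (j) (z : W1 ⊗[F] W2),
      coord j (TensorProduct.map (τ1 1) (τ2 h) z) = τ2 h (coord j z) := by
    intro h j z
    have : τ1 1 = LinearMap.id := by rw [map_one]; rfl
    rw [this, coord_map]
  -- pick a nonzero element of `p` with minimal coordinate support
  have hex : ∃ k, ∃ z ∈ p, z ≠ 0 ∧
      (Finset.univ.filter (fun j => coord j z ≠ 0)).card = k := by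
    obtain ⟨z, hzp, hz0⟩ := (Submodule.ne_bot_iff p).1 hpbot
    exact ⟨_, z, hzp, hz0, rfl⟩
  obtain ⟨xx, hxp, hx0, hxcard⟩ := Nat.find_spec hex
  set n := Nat.find hex with hn
  set S := Finset.univ.filter (fun j => coord j xx ≠ 0) with hS
  have hSmem : ∀ j, j ∈ S ↔ coord j xx ≠ 0 := by
    intro j; simp [hS]
  have hSne : S.Nonempty := by
    rw [Finset.nonempty_iff_ne_empty]
    intro hemp
    apply hx0
    rw [← recon xx]
    refine Finset.sum_eq_zero fun j _ => ?_
    have : coord j xx = 0 := by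
      by_contra hvv
      exact (Finset.notMem_empty j) (hemp ▸ (hSmem j).2 hvv)
    rw [this, TensorProduct.tmul_zero]
  obtain ⟨j₀, hj₀⟩ := hSne
  -- minimality: elements of `p` supported in `S` vanishing at `j₀` are zero
  have small : ∀ y ∈ p, (∀ j, j ∉ S → coord j y = 0) → coord j₀ y = 0 → y = 0 := by
    intro y hyp hys hy0
    by_contra hy
    have hsub : Finset.univ.filter (fun j => coord j y ≠ 0) ⊆ S.erase j₀ := by
      intro j hj
      simp only [Finset.mem_filter] at hj
      refine Finset.mem_erase.2 ⟨?_, ?_⟩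
      · rintro rfl; exact hj.2 hy0
      · by_contra hjS; exact hj.2 (hys j hjS)
    have hlt : (Finset.univ.filter (fun j => coord j y ≠ 0)).card < n := by
      calc (Finset.univ.filter (fun j => coord j y ≠ 0)).card
          ≤ (S.erase j₀).card := Finset.card_le_card hsub
        _ < S.card := Finset.card_erase_lt_of_mem hj₀
        _ = n := hxcard
    exact Nat.find_min hex hlt ⟨y, hyp, hy, rfl⟩
  -- the submodule of elements of `p` supported in `S`
  set Q : Submodule F (W1 ⊗[F] W2) :=
    p ⊓ ⨅ (j : Fin m) (_ : j ∉ S), LinearMap.ker (coord j) with hQdef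
  have hQmem : ∀ z, z ∈ Q ↔ z ∈ p ∧ ∀ j, j ∉ S → coord j z = 0 := by
    intro z
    simp [hQdef, Submodule.mem_inf, Submodule.mem_iInf, LinearMap.mem_ker]
  have hxQ : xx ∈ Q := (hQmem xx).2 ⟨hxp, fun j hj => by
    by_contra hvv; exact hj ((hSmem j).2 hvv)⟩
  -- `Q` is invariant under the `1 × H2` action
  have hmapmem : ∀ (h : H2) (z), z ∈ Q → TensorProduct.map (τ1 1) (τ2 h) z ∈ Q := by
    intro h z hz
    rw [hQmem] at hz ⊢
    refine ⟨hp 1 h z hz.1, fun j hj => ?_⟩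
    rw [coord_map1, hz.2 j hj, map_zero]
  -- the `j₀`-coordinate map on `Q` is bijective onto `W2`
  set ψ : Q →ₗ[F] W2 := coord j₀ ∘ₗ Q.subtype with hψdef
  have hψx : ψ ⟨xx, hxQ⟩ ≠ 0 := (hSmem j₀).1 hj₀
  have hψinj : Function.Injective ψ := by
    rw [injective_iff_map_eq_zero]
    intro q hq
    have hq2 := (hQmem q.1).1 q.2
    exact Subtype.ext (small q.1 hq2.1 hq2.2 hq)
  have hψsurj : Function.Surjective ψ := by
    rw [← LinearMap.range_eq_top]
    rcases hirr2 (LinearMap.range ψ) (by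
      intro h w hw
      rw [LinearMap.mem_range] at hw ⊢
      obtain ⟨q, rfl⟩ := hw
      refine ⟨⟨_, hmapmem h q.1 q.2⟩, ?_⟩
      show coord j₀ (TensorProduct.map (τ1 1) (τ2 h) q.1) = τ2 h (coord j₀ q.1)
      rw [coord_map1]) with h1 | h1
    · exfalso
      apply hψx
      have hmem : ψ ⟨xx, hxQ⟩ ∈ LinearMap.range ψ := ⟨⟨xx, hxQ⟩, rfl⟩
      rw [h1] at hmem
      exact (Submodule.mem_bot F).1 hmem
    · exact h1
  set e : Q ≃ₗ[F] W2 := LinearEquiv.ofBijective ψ ⟨hψinj, hψsurj⟩ with hedef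
  have heψ : ∀ q : Q, e q = ψ q := fun q => rfl
  -- equivariance of the inverse
  have hsymm : ∀ (h : H2) (u : W2),
      ((e.symm (τ2 h u) : Q) : W1 ⊗[F] W2)
        = TensorProduct.map (τ1 1) (τ2 h) ((e.symm u : Q) : W1 ⊗[F] W2) := by
    intro h u
    have hq' : TensorProduct.map (τ1 1) (τ2 h) ((e.symm u : Q) : W1 ⊗[F] W2) ∈ Q :=
      hmapmem h _ (e.symm u).2
    have he : e ⟨_, hq'⟩ = τ2 h u := by
      rw [heψ]
      show coord j₀ (TensorProduct.map (τ1 1) (τ2 h) ((e.symm u : Q) : W1 ⊗[F] W2))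
        = τ2 h u
      rw [coord_map1]
      congr 1
      have : ψ (e.symm u) = u := e.apply_symm_apply u
      exact this
    rw [← he, e.symm_apply_apply]
  -- each coordinate of the inverse is an equivariant endomorphism, hence a scalar
  have hcomm : ∀ (j) (h : H2) (u : W2),
      coord j ((e.symm (τ2 h u) : Q) : W1 ⊗[F] W2)
        = τ2 h (coord j ((e.symm u : Q) : W1 ⊗[F] W2)) := by
    intro j h u
    rw [hsymm, coord_map1]
  have hschur : ∀ j, ∃ c : F, ∀ u : W2,
      coord j ((e.symm u : Q) : W1 ⊗[F] W2) = c • u := by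
    intro j
    exact commutant_scalar τ2 hτ2
      (coord j ∘ₗ Q.subtype ∘ₗ (e.symm : W2 →ₗ[F] Q)) (fun h u => hcomm j h u)
  choose cc hcc using hschur
  -- the vector `w := ∑ j ∈ S, cc j • b j` satisfies `w ⊗ u ∈ p` for all `u`
  set wv : W1 := ∑ j ∈ S, cc j • b j with hwv
  have hwmem : ∀ u : W2, wv ⊗ₜ[F] u = ((e.symm u : Q) : W1 ⊗[F] W2) := by
    intro u
    have h0 : ∀ j, j ∉ S → coord j ((e.symm u : Q) : W1 ⊗[F] W2) = 0 :=
      ((hQmem _).1 (e.symm u).2).2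
    calc wv ⊗ₜ[F] u = ∑ j ∈ S, (cc j • b j) ⊗ₜ[F] u := by
          rw [hwv, TensorProduct.sum_tmul]
      _ = ∑ j ∈ S, b j ⊗ₜ[F] (cc j • u) := by
          refine Finset.sum_congr rfl fun j _ => ?_
          rw [TensorProduct.smul_tmul]
      _ = ∑ j ∈ S, b j ⊗ₜ[F] coord j ((e.symm u : Q) : W1 ⊗[F] W2) := by
          refine Finset.sum_congr rfl fun j _ => ?_
          rw [hcc j u]
      _ = ∑ j, b j ⊗ₜ[F] coord j ((e.symm u : Q) : W1 ⊗[F] W2) :=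
          Finset.sum_subset (Finset.subset_univ S) fun j _ hj => by
            rw [h0 j hj, TensorProduct.tmul_zero]
      _ = _ := recon _
  have hwp : ∀ u : W2, wv ⊗ₜ[F] u ∈ p := fun u =>
    (hwmem u) ▸ ((hQmem _).1 (e.symm u).2).1
  have hw0 : wv ≠ 0 := by
    intro hw
    obtain ⟨u, hu⟩ := exists_ne (0 : W2)
    apply hu
    have h1 := hwmem u
    rw [hw, TensorProduct.zero_tmul] at h1
    have h2 : (e.symm u : Q) = 0 := Subtype.ext h1.symm
    have := e.symm.map_eq_zero_iff.1 h2
    exact this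
  -- the set of `w'` with `w' ⊗ W2 ⊆ p` is a nonzero invariant subspace of `W1`
  set U1 : Submodule F W1 := ⨅ u : W2, p.comap ((TensorProduct.mk F W1 W2).flip u)
    with hU1def
  have hU1mem : ∀ w', w' ∈ U1 ↔ ∀ u : W2, w' ⊗ₜ[F] u ∈ p := by
    intro w'
    simp [hU1def, Submodule.mem_iInf, Submodule.mem_comap]
  have hU1top : U1 = ⊤ := by
    rcases hirr1 U1 (by
      intro h w' hw'
      rw [hU1mem] at hw' ⊢
      intro u
      have := hp h 1 (w' ⊗ₜ[F] u) (hw' u)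
      rwa [TensorProduct.map_tmul, map_one, Module.End.one_apply] at this) with h1 | h1
    · exact absurd (h1 ▸ (hU1mem wv).2 hwp)
        (by simpa [Submodule.mem_bot] using hw0)
    · exact h1
  -- conclude
  rw [Submodule.eq_top_iff']
  intro z
  rw [← recon z]
  exact Submodule.sum_mem p fun j _ =>
    (hU1mem (b j)).1 (hU1top ▸ Submodule.mem_top) _
end

section
/- Let K be a field and let L1 and L2 be finite Galois extensions of K contained in a common extension field Ω of K, with Galois groups G1 = Gal(L1/K) and G2 = Gal(L2/K). If G1 and G2 are disjoint, then the natural restriction homomorphism Gal(L1·L2 / K) → Gal(L1/K) × Gal(L2/K) from the Galois group of the compositum L1·L2 is an isomorphism; in particular, L1 and L2 are linearly disjoint over K, that is, [L1·L2 : K] = [L1 : K]·[L2 : K]. -/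
open Function IntermediateField

universe u

/-- Finite groups `G1` and `G2` are *disjoint* if every group `Q` admitting surjective
homomorphisms from both `G1` and `G2` is trivial. -/
def GroupsDisjoint (G1 : Type u) (G2 : Type u) [Group G1] [Group G2] : Prop :=
  ∀ (Q : Type u) [Group Q] (φ1 : G1 →* Q) (φ2 : G2 →* Q),
    Surjective φ1 → Surjective φ2 → Subsingleton Q

/-!
Restriction `Gal(L1⬝L2/K) → Gal(L1/K) × Gal(L2/K)` is injective because an automorphism fixing
both `L1` and `L2` fixes the field they generate. Its image projects onto both factors, so by
Goursat's lemma it is the preimage of the graph of an isomorphism between a quotient of `Gal(L1/K)`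
and a quotient of `Gal(L2/K)`; disjointness forces these quotients to be trivial, so the image is
everything. Comparing orders gives the degree formula.
-/

theorem GroupsDisjoint.prod_surjective {G : Type*} {G1 G2 : Type u} [Group G] [Group G1]
    [Group G2] (hdisj : GroupsDisjoint G1 G2) {f1 : G →* G1} {f2 : G →* G2}
    (hf1 : Surjective f1) (hf2 : Surjective f2) : Surjective (f1.prod f2) := by
  set I := (f1.prod f2).range
  have hI1 : Surjective (Prod.fst ∘ I.subtype) := fun g1 ↦
    let ⟨g, hg⟩ := hf1 g1; ⟨⟨_, g, rfl⟩, hg⟩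
  have hI2 : Surjective (Prod.snd ∘ I.subtype) := fun g2 ↦
    let ⟨g, hg⟩ := hf2 g2; ⟨⟨_, g, rfl⟩, hg⟩
  -- Goursat's `e` makes `G1 ⧸ I.goursatFst ≃* G2 ⧸ I.goursatSnd` a common quotient of `G1`, `G2`.
  have := Subgroup.normal_goursatFst hI1
  have := Subgroup.normal_goursatSnd hI2
  obtain ⟨e, -⟩ := Subgroup.goursat_surjective hI1 hI2
  have hFst : I.goursatFst = ⊤ := QuotientGroup.subgroup_eq_top_of_subsingleton _ <|
    hdisj _ (QuotientGroup.mk' _) (e.symm.toMonoidHom.comp (QuotientGroup.mk' _))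
      (QuotientGroup.mk'_surjective _) (e.symm.surjective.comp (QuotientGroup.mk'_surjective _))
  have hSnd : I.goursatSnd = ⊤ := QuotientGroup.subgroup_eq_top_of_subsingleton _ <|
    hdisj _ (e.toMonoidHom.comp (QuotientGroup.mk' _)) (QuotientGroup.mk' _)
      (e.surjective.comp (QuotientGroup.mk'_surjective _)) (QuotientGroup.mk'_surjective _)
  rw [← MonoidHom.range_eq_top, eq_top_iff, ← Subgroup.top_prod_top, ← hFst, ← hSnd]
  exact I.goursatFst_prod_goursatSnd_le

theorem AlgEquiv.ker_restrictNormalHom {F K₁ E : Type*} [Field F] [Field K₁] [Field E]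
    [Algebra F K₁] [Algebra F E] [Algebra K₁ E] [IsScalarTower F K₁ E] [Normal F K₁] :
    (AlgEquiv.restrictNormalHom (F := F) (K₁ := E) K₁).ker =
      (IsScalarTower.toAlgHom F K₁ E).fieldRange.fixingSubgroup := by
  rw [AlgHom.fieldRange_eq_map, map_fixingSubgroup, fixingSubgroup_top, MonoidHom.comap_bot]

theorem AlgEquiv.restrictNormalHom_prod_injective {F K₁ K₂ E : Type*} [Field F] [Field K₁]
    [Field K₂] [Field E] [Algebra F K₁] [Algebra F K₂] [Algebra F E] [Algebra K₁ E]
    [Algebra K₂ E] [IsScalarTower F K₁ E] [IsScalarTower F K₂ E] [Normal F K₁] [Normal F K₂]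
    (h : (IsScalarTower.toAlgHom F K₁ E).fieldRange ⊔ (IsScalarTower.toAlgHom F K₂ E).fieldRange
      = ⊤) :
    Injective ((AlgEquiv.restrictNormalHom (F := F) (K₁ := E) K₁).prod
      (AlgEquiv.restrictNormalHom K₂)) := by
  rw [← MonoidHom.ker_eq_bot_iff, MonoidHom.ker_prod, ker_restrictNormalHom,
    ker_restrictNormalHom, ← fixingSubgroup_sup, h, fixingSubgroup_top]

theorem IntermediateField.restrict_sup_restrict_eq_top {K Ω : Type*} [Field K] [Field Ω]
    [Algebra K Ω] (L1 L2 : IntermediateField K Ω) :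
    restrict (le_sup_left : L1 ≤ L1 ⊔ L2) ⊔ restrict (le_sup_right : L2 ≤ L1 ⊔ L2) = ⊤ := by
  apply lift_injective (L1 ⊔ L2)
  change map _ _ = lift ⊤
  rw [IntermediateField.map_sup]
  change lift _ ⊔ lift _ = _
  rw [lift_restrict, lift_restrict, lift_top]

/-- Let `L1`, `L2` be finite Galois extensions of `K` inside a common extension `Ω`, with
disjoint Galois groups `Gal(L1/K)` and `Gal(L2/K)`. Then the natural restriction homomorphism
`Gal(L1⬝L2/K) → Gal(L1/K) × Gal(L2/K)` from the Galois group of the compositum is an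
isomorphism (i.e. bijective); in particular `L1` and `L2` are linearly disjoint over `K`:
`[L1⬝L2 : K] = [L1 : K]⬝[L2 : K]`. -/
theorem galois_compositum_of_disjoint_groups {K Ω : Type u} [Field K] [Field Ω] [Algebra K Ω]
    (L1 L2 : IntermediateField K Ω)
    [FiniteDimensional K L1] [FiniteDimensional K L2]
    [IsGalois K L1] [IsGalois K L2]
    (hdisj : GroupsDisjoint (L1 ≃ₐ[K] L1) (L2 ≃ₐ[K] L2)) :
    letI : Algebra ↥L1 ↥(L1 ⊔ L2) :=
      (IntermediateField.inclusion (le_sup_left : L1 ≤ L1 ⊔ L2)).toAlgebra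
    letI : Algebra ↥L2 ↥(L1 ⊔ L2) :=
      (IntermediateField.inclusion (le_sup_right : L2 ≤ L1 ⊔ L2)).toAlgebra
    haveI : IsScalarTower K ↥L1 ↥(L1 ⊔ L2) :=
      IsScalarTower.of_algebraMap_eq fun x => rfl
    haveI : IsScalarTower K ↥L2 ↥(L1 ⊔ L2) :=
      IsScalarTower.of_algebraMap_eq fun x => rfl
    Bijective (fun σ : ↥(L1 ⊔ L2) ≃ₐ[K] ↥(L1 ⊔ L2) =>
        (AlgEquiv.restrictNormalHom (F := K) (K₁ := ↥(L1 ⊔ L2)) ↥L1 σ,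
         AlgEquiv.restrictNormalHom (F := K) (K₁ := ↥(L1 ⊔ L2)) ↥L2 σ)) ∧
      Module.finrank K ↥(L1 ⊔ L2) = Module.finrank K ↥L1 * Module.finrank K ↥L2 := by
  let _ : Algebra ↥L1 ↥(L1 ⊔ L2) := (inclusion le_sup_left).toAlgebra
  let _ : Algebra ↥L2 ↥(L1 ⊔ L2) := (inclusion le_sup_right).toAlgebra
  have : IsScalarTower K ↥L1 ↥(L1 ⊔ L2) := .of_algebraMap_eq fun _ ↦ rfl
  have : IsScalarTower K ↥L2 ↥(L1 ⊔ L2) := .of_algebraMap_eq fun _ ↦ rfl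
  have hbij : Bijective ((AlgEquiv.restrictNormalHom (F := K) (K₁ := ↥(L1 ⊔ L2)) L1).prod
      (AlgEquiv.restrictNormalHom L2)) :=
    ⟨AlgEquiv.restrictNormalHom_prod_injective (restrict_sup_restrict_eq_top L1 L2),
      hdisj.prod_surjective (AlgEquiv.restrictNormalHom_surjective _)
        (AlgEquiv.restrictNormalHom_surjective _)⟩
  refine ⟨hbij, ?_⟩
  rw [← IsGalois.card_aut_eq_finrank K ↥(L1 ⊔ L2), ← IsGalois.card_aut_eq_finrank K L1,
    ← IsGalois.card_aut_eq_finrank K L2, ← Nat.card_prod]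
  exact Nat.card_eq_of_bijective _ hbij
end

section
/- Let L/K be a finite Galois extension of fields, n a positive integer, and Γ a transitive subgroup of the symmetric group S_n such that every automorphism u of Γ is induced by conjugation by some element of S_n, i.e., for every automorphism u of Γ there exists s ∈ S_n with u(z) = s z s⁻¹ for all z ∈ Γ. Let f(x), h(x) ∈ K[x] be separable irreducible polynomials of degree n, each having L as its splitting field over K. Suppose there exist orderings α_1, …, α_n of the roots of f in L and β_1, …, β_n of the roots of h in L such that the images of the two resulting injective homomorphisms r_f : Gal(L/K) → S_n and r_h : Gal(L/K) → S_n (where σ(α_i) = α_{r_f(σ)(i)} and σ(β_i) = β_{r_h(σ)(i)} for all σ ∈ Gal(L/K)) both coincide with Γ. Then for every root α ∈ L of f there exists a root β ∈ L of h such that K(α) = K(β). -/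
open Function Polynomial

universe u

lemma mem_fixingSubgroup_adjoin_simple {K L : Type u} [Field K] [Field L] [Algebra K L]
    (a : L) (σ : L ≃ₐ[K] L) :
    σ ∈ (IntermediateField.adjoin K {a}).fixingSubgroup ↔ σ a = a := by
  constructor
  · intro hσ
    exact ((IntermediateField.mem_fixingSubgroup_iff _ σ).mp hσ) a
      (IntermediateField.mem_adjoin_simple_self K a)
  · intro hσa
    rw [IntermediateField.mem_fixingSubgroup_iff]
    intro x hx
    have hle : IntermediateField.adjoin K {a} ≤
        IntermediateField.fixedField (Subgroup.zpowers σ) := by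
      rw [IntermediateField.adjoin_le_iff]
      intro y hy
      rcases hy with rfl
      rintro ⟨g, hg⟩
      have hmem : σ ∈ MulAction.stabilizer (L ≃ₐ[K] L) y := hσa
      exact (Subgroup.zpowers_le.mpr hmem) hg
    exact hle hx ⟨σ, Subgroup.mem_zpowers σ⟩

/-- Let `L/K` be a finite Galois extension, `n` a positive integer and `Γ` a transitive
subgroup of `S_n` all of whose automorphisms are induced by conjugation by elements of `S_n`.
Let `f, h ∈ K[x]` be separable irreducible polynomials of degree `n`, each with splitting
field `L`, and suppose there are orderings `α_1, …, α_n` of the roots of `f` and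
`β_1, …, β_n` of the roots of `h` such that the images of the two resulting injective
homomorphisms `r_f, r_h : Gal(L/K) → S_n` both coincide with `Γ`. Then for every root
`a ∈ L` of `f` there is a root `b ∈ L` of `h` with `K(a) = K(b)`. -/
theorem root_fields_coincide {K L : Type u} [Field K] [Field L] [Algebra K L]
    [FiniteDimensional K L] [IsGalois K L]
    (n : ℕ) (hn : 0 < n)
    (Γ : Subgroup (Equiv.Perm (Fin n)))
    (htrans : ∀ i j : Fin n, ∃ g ∈ Γ, g i = j)
    (haut : ∀ u : Γ ≃* Γ, ∃ s : Equiv.Perm (Fin n),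
      ∀ z : Γ, ((u z : Γ) : Equiv.Perm (Fin n)) = s * (z : Equiv.Perm (Fin n)) * s⁻¹)
    (f h : Polynomial K)
    (hfsep : f.Separable) (hhsep : h.Separable)
    (hfirr : Irreducible f) (hhirr : Irreducible h)
    (hfdeg : f.natDegree = n) (hhdeg : h.natDegree = n)
    (hfL : IsSplittingField K L f) (hhL : IsSplittingField K L h)
    (α β : Fin n → L)
    (hαinj : Injective α) (hβinj : Injective β)
    (hαroot : ∀ i, aeval (α i) f = 0) (hβroot : ∀ i, aeval (β i) h = 0)
    (rf rh : (L ≃ₐ[K] L) →* Equiv.Perm (Fin n))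
    (hrf : ∀ (σ : L ≃ₐ[K] L) (i : Fin n), σ (α i) = α (rf σ i))
    (hrh : ∀ (σ : L ≃ₐ[K] L) (i : Fin n), σ (β i) = β (rh σ i))
    (hrfinj : Injective rf) (hrhinj : Injective rh)
    (hrfΓ : rf.range = Γ) (hrhΓ : rh.range = Γ) :
    ∀ a : L, aeval a f = 0 →
      ∃ b : L, aeval b h = 0 ∧
        IntermediateField.adjoin K {a} = IntermediateField.adjoin K {b} := by
  classical
  -- Build isomorphisms with Γ and the automorphism u = rh ∘ rf⁻¹
  let e1 : (L ≃ₐ[K] L) ≃* Γ :=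
    (MonoidHom.ofInjective hrfinj).trans (MulEquiv.subgroupCongr hrfΓ)
  let e2 : (L ≃ₐ[K] L) ≃* Γ :=
    (MonoidHom.ofInjective hrhinj).trans (MulEquiv.subgroupCongr hrhΓ)
  obtain ⟨s, hs⟩ := haut (e1.symm.trans e2)
  have key : ∀ σ : L ≃ₐ[K] L, rh σ = s * rf σ * s⁻¹ := by
    intro σ
    have h1 : ((e1 σ : Γ) : Equiv.Perm (Fin n)) = rf σ := by
      exact MonoidHom.ofInjective_apply hrfinj
    have h2 : (((e1.symm.trans e2) (e1 σ) : Γ) : Equiv.Perm (Fin n)) = rh σ := by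
      have he : (e1.symm.trans e2) (e1 σ) = e2 σ := by
        rw [MulEquiv.trans_apply, MulEquiv.symm_apply_apply]
      rw [he]
      exact MonoidHom.ofInjective_apply hrhinj
    have := hs (e1 σ)
    rw [h2, h1] at this
    exact this
  intro a ha
  -- a is one of the α i
  have hfne : f ≠ 0 := hfirr.ne_zero
  have hamem : a ∈ Finset.image α Finset.univ := by
    by_contra hnot
    have hsub : insert a (Finset.image α Finset.univ) ⊆
        (f.map (algebraMap K L)).roots.toFinset := by
      intro x hx
      rw [Multiset.mem_toFinset, Polynomial.mem_roots_map hfne]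
      rcases Finset.mem_insert.mp hx with rfl | hx
      · rw [← Polynomial.aeval_def]; exact ha
      · rcases Finset.mem_image.mp hx with ⟨i, _, rfl⟩
        rw [← Polynomial.aeval_def]; exact hαroot i
    have hc1 : (insert a (Finset.image α Finset.univ)).card = n + 1 := by
      rw [Finset.card_insert_of_notMem hnot, Finset.card_image_of_injective _ hαinj]
      simp
    have hc2 : ((f.map (algebraMap K L)).roots.toFinset).card ≤ n := by
      calc ((f.map (algebraMap K L)).roots.toFinset).card
          ≤ Multiset.card (f.map (algebraMap K L)).roots := Multiset.toFinset_card_le _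
        _ ≤ (f.map (algebraMap K L)).natDegree := Polynomial.card_roots' _
        _ = n := by rw [Polynomial.natDegree_map]; exact hfdeg
    have := (Finset.card_le_card hsub).trans hc2
    omega
  obtain ⟨i, -, hi⟩ := Finset.mem_image.mp hamem
  refine ⟨β (s i), hβroot (s i), ?_⟩
  have hfix : (IntermediateField.adjoin K {a}).fixingSubgroup =
      (IntermediateField.adjoin K {β (s i)}).fixingSubgroup := by
    ext σ
    rw [mem_fixingSubgroup_adjoin_simple, mem_fixingSubgroup_adjoin_simple, ← hi,
      hrf σ i, hrh σ (s i), key σ]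
    constructor
    · intro hα
      have : rf σ i = i := hαinj hα
      have : (s * rf σ * s⁻¹) (s i) = s i := by
        simp [Equiv.Perm.mul_apply, this]
      rw [this]
    · intro hβ
      have h3 : (s * rf σ * s⁻¹) (s i) = s (rf σ i) := by
        simp [Equiv.Perm.mul_apply]
      rw [h3] at hβ
      have : s (rf σ i) = s i := hβinj hβ
      have : rf σ i = i := s.injective this
      rw [this]
  have := congrArg IntermediateField.fixedField hfix
  rwa [IsGalois.fixedField_fixingSubgroup, IsGalois.fixedField_fixingSubgroup] at this
end

section
/- Let F be a field, H1 and H2 groups, W1 a finite-dimensional simple module over the group algebra F[H1], and W2 a finite-dimensional absolutely simple module over the group algebra F[H2]. Let D = End_{F[H1]}(W1) be the endomorphism ring of the F[H1]-module W1, acting on W1 ⊗_F W2 through the first tensor factor. Then the image of the natural F-algebra homomorphism F[H1 × H2] = F[H1] ⊗_F F[H2] → End_F(W1 ⊗_F W2) coincides with End_D(W1 ⊗_F W2), the ring of D-linear endomorphisms of W1 ⊗_F W2. -/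
open Function Module
open scoped TensorProduct

universe u v w x y

/-!
Identify `End W1 ⊗ End W2` with `End (W1 ⊗ W2)`. Expanding in a basis of `End W2` shows that the
commutant of `D ⊗ 1` is `C(D) ⊗ End W2`, where `C(D)` is the commutant of `D` in `End W1`. By the
Jacobson density theorem `C(D)` is the span of `τ1(H1)`. By Burnside's theorem the span of
`τ2(H2)` is all of `End W2`: over an algebraic closure Schur's lemma makes the commutant scalar, so
density gives everything there, and a dimension count descends this to `F`. Hence both sides are
the span of the `τ1 h1 ⊗ τ2 h2`.
-/

namespace Module.End

def adjoinLinearOfMemCentralizer {R M : Type*} [CommSemiring R] [AddCommMonoid M] [Module R M]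
    {s : Set (End R M)} {d : End R M} (hd : d ∈ Set.centralizer s) :
    End (Algebra.adjoin R s) M where
  toFun := d
  map_add' := d.map_add
  map_smul' a m := by
    have := Set.mem_centralizer_iff.mp (Algebra.adjoin_le_centralizer_centralizer R s a.2) d hd
    exact congr($this m)

theorem centralizer_centralizer_eq_adjoin {R M : Type*} [CommRing R] [AddCommGroup M]
    [Module R M] [Module.Finite R M] (s : Set (End R M))
    [IsSemisimpleModule (Algebra.adjoin R s) M] :
    Subalgebra.centralizer R (Subalgebra.centralizer R s : Set (End R M)) =
      Algebra.adjoin R s := by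
  refine le_antisymm (fun g hg => ?_) (Algebra.adjoin_le_centralizer_centralizer R s)
  let f : End (End (Algebra.adjoin R s) M) M :=
    { toFun := g
      map_add' := g.map_add
      map_smul' φ m := by
        have hφ : φ.restrictScalars R ∈ Set.centralizer s := fun x hx => by
          ext m
          exact (φ.map_smul ⟨x, Algebra.subset_adjoin hx⟩ m).symm
        exact congr($(hg _ hφ) m).symm }
  obtain ⟨t, ht⟩ := Module.Finite.fg_top (R := R) (M := M)
  obtain ⟨r, hr⟩ := jacobson_density f t
  have hgr : g = r := LinearMap.ext_on ht hr
  exact hgr ▸ r.2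

theorem centralizer_eq_bot_of_isAlgClosed {k V : Type*} [Field k] [IsAlgClosed k]
    [AddCommGroup V] [Module k V] [FiniteDimensional k V] (s : Set (End k V))
    [IsSimpleModule (Algebra.adjoin k s) V] : Subalgebra.centralizer k s = ⊥ := by
  refine eq_bot_iff.mpr fun d hd => ?_
  obtain ⟨c, hc⟩ := (IsSimpleModule.algebraMap_end_bijective_of_isAlgClosed k
    (A := Algebra.adjoin k s) (V := V)).2 (adjoinLinearOfMemCentralizer hd)
  exact ⟨c, LinearMap.ext fun v => congr($hc v)⟩

end Module.End

theorem Algebra.isSimpleModule_adjoin {k V : Type*} [CommRing k] [AddCommGroup V] [Module k V]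
    [Nontrivial V] (s : Set (End k V))
    (hs : ∀ p : Submodule k V, (∀ f ∈ s, ∀ v ∈ p, f v ∈ p) → p = ⊥ ∨ p = ⊤) :
    IsSimpleModule (Algebra.adjoin k s) V := by
  refine { eq_bot_or_eq_top := fun p => ?_ }
  have := hs (p.restrictScalars k) fun f hf v hv => p.smul_mem ⟨f, Algebra.subset_adjoin hf⟩ hv
  simpa using this

theorem Module.End.adjoin_eq_top_of_isAlgClosed {E V : Type*} [Field E] [IsAlgClosed E]
    [AddCommGroup V] [Module E V] [FiniteDimensional E V] [Nontrivial V] (s : Set (End E V))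
    (hs : ∀ p : Submodule E V, (∀ f ∈ s, ∀ v ∈ p, f v ∈ p) → p = ⊥ ∨ p = ⊤) :
    Algebra.adjoin E s = ⊤ := by
  have := Algebra.isSimpleModule_adjoin s hs
  rw [← centralizer_centralizer_eq_adjoin s, centralizer_eq_bot_of_isAlgClosed s,
    Subalgebra.centralizer_eq_top_iff_subset]
  exact bot_le (a := Subalgebra.center E _)

theorem Subalgebra.toSubmodule_adjoin_range {R A M : Type*} [CommSemiring R] [Semiring A]
    [Algebra R A] [Monoid M] (f : M →* A) :
    Subalgebra.toSubmodule (Algebra.adjoin R (Set.range f)) = Submodule.span R (Set.range f) := by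
  rw [Algebra.adjoin_eq_span, ← MonoidHom.coe_mrange, Submonoid.closure_eq]

theorem Submodule.finrank_span_image_le {F E V V' : Type*} [Field F] [Field E] [Algebra F E]
    [AddCommGroup V] [Module F V] [AddCommGroup V'] [Module F V'] [Module E V']
    [IsScalarTower F E V'] (β : V →ₗ[F] V') (s : Set V) [FiniteDimensional F (span F s)] :
    finrank E (span E (β '' s)) ≤ finrank F (span F s) :=
  calc finrank E (span E (β '' s)) = finrank E (span E ((span F s).map β : Set V')) := by
        rw [map_span, span_span_of_tower]
    _ ≤ finrank E (E ⊗[F] (span F s).map β) :=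
        LinearMap.finrank_le_finrank_of_surjective (surjective_tensorToSpan _ _)
    _ = finrank F ((span F s).map β) := finrank_baseChange
    _ ≤ finrank F (span F s) := finrank_map_le _ _

theorem Representation.span_range_eq_top_of_baseChange {F E H W : Type*} [Field F] [Field E]
    [IsAlgClosed E] [Algebra F E] [Monoid H] [AddCommGroup W] [Module F W] [FiniteDimensional F W]
    (τ : Representation F H W) [Nontrivial (E ⊗[F] W)]
    (hτ : ∀ p : Submodule E (E ⊗[F] W), (∀ h : H, ∀ x ∈ p, (τ h).baseChange E x ∈ p) →
      p = ⊥ ∨ p = ⊤) :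
    Submodule.span F (Set.range τ) = ⊤ := by
  let ρ : H →* End E (E ⊗[F] W) := (End.baseChangeHom F E W : End F W →* _).comp τ
  have hspan : Submodule.span E (Set.range ρ) = ⊤ := by
    rw [← Subalgebra.toSubmodule_adjoin_range, End.adjoin_eq_top_of_isAlgClosed (Set.range ρ)
      fun p hp => hτ p fun h => hp _ ⟨h, rfl⟩, Algebra.top_toSubmodule]
  refine Submodule.eq_top_of_finrank_eq (le_antisymm (Submodule.finrank_le _) ?_)
  calc finrank F (End F W) = finrank E (End E (E ⊗[F] W)) := by
        rw [finrank_linearMap, finrank_linearMap, finrank_baseChange]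
    _ = finrank E (Submodule.span E (Set.range ρ)) := by rw [hspan, finrank_top]
    _ ≤ finrank F (Submodule.span F (Set.range τ)) := by
        rw [show Set.range ρ = LinearMap.baseChangeHom F E W W '' Set.range τ from
          Set.range_comp (LinearMap.baseChangeHom F E W W) τ]
        exact Submodule.finrank_span_image_le (V' := End E (E ⊗[F] W)) _ _

theorem RepIsIrreducible.span_range_eq_centralizer_centralizer {F H W : Type*} [Field F]
    [Group H] [AddCommGroup W] [Module F W] [FiniteDimensional F W] {τ : Representation F H W}
    (hτ : RepIsIrreducible τ) :
    Submodule.span F (Set.range τ) = Subalgebra.toSubmodule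
      (Subalgebra.centralizer F (Subalgebra.centralizer F (Set.range τ) : Set (End F W))) := by
  have := hτ.1
  have := Algebra.isSimpleModule_adjoin (Set.range τ) fun p hp => hτ.2 p fun h => hp _ ⟨h, rfl⟩
  rw [End.centralizer_centralizer_eq_adjoin, Subalgebra.toSubmodule_adjoin_range]

theorem Set.mem_centralizer_image_iff {A B : Type*} [Mul A] [Mul B] (e : A ≃* B) (S : Set A)
    (b : B) : b ∈ Set.centralizer (e '' S) ↔ e.symm b ∈ Set.centralizer S := by
  simp only [Set.mem_centralizer_iff, Set.forall_mem_image]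
  refine forall₂_congr fun a _ => ?_
  rw [← e.injective.eq_iff, map_mul, map_mul, e.apply_symm_apply]

section TensorProduct

variable {R M N : Type*} [CommRing R] [AddCommGroup M] [Module R M] [Free R M]
  [Module.Finite R M] [AddCommGroup N] [Module R N] [Free R N] [Module.Finite R N]

variable (R M N) in
noncomputable def Module.endTensorEndAlgEquiv :
    End R M ⊗[R] End R N ≃ₐ[R] End R (M ⊗[R] N) :=
  .ofBijective (endTensorEndAlgHom (S := R) (A := R)) <| by
    have : (endTensorEndAlgHom (S := R) (A := R)).toLinearMap =
        (homTensorHomEquiv R M N M N).toLinearMap :=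
      TensorProduct.ext' fun _ _ => (homTensorHomEquiv_apply ..).symm
    exact congr(⇑$this) ▸ (homTensorHomEquiv R M N M N).bijective

theorem TensorProduct.centralizer_image_map_id (T : Set (End R M)) :
    Set.centralizer ((fun d : End R M => TensorProduct.map d (LinearMap.id : End R N)) '' T) =
      Submodule.map₂ (TensorProduct.mapBilinear (.id R) M N M N)
        (Subalgebra.toSubmodule (Subalgebra.centralizer R T)) ⊤ := by
  set Φ := endTensorEndAlgEquiv R M N
  have hT : (fun d : End R M => TensorProduct.map d (LinearMap.id : End R N)) '' T =
      Φ '' (Algebra.TensorProduct.includeLeft (S := R) (B := End R N) '' T) := by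
    rw [Set.image_image]; rfl
  have hΦ : Submodule.map₂ (TensorProduct.mapBilinear (.id R) M N M N)
        (Subalgebra.toSubmodule (Subalgebra.centralizer R T)) ⊤ =
      Submodule.map (Φ.toLinearEquiv : _ →ₗ[R] _) (Subalgebra.toSubmodule
        (Algebra.TensorProduct.map (Subalgebra.centralizer R T).val
          (AlgHom.id R (End R N))).range) := by
    have hrange : Subalgebra.toSubmodule (Algebra.TensorProduct.map
        (Subalgebra.centralizer R T).val (AlgHom.id R (End R N))).range =
        LinearMap.range (TensorProduct.map
          (Subalgebra.toSubmodule (Subalgebra.centralizer R T)).subtype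
          (LinearMap.id : End R N →ₗ[R] End R N)) :=
      Submodule.ext fun _ => Iff.rfl
    rw [hrange, TensorProduct.range_map, Submodule.map_map₂, Submodule.range_subtype,
      LinearMap.range_id]
    rfl
  ext g
  rw [hT, hΦ, SetLike.mem_coe, Submodule.mem_map_equiv,
    ← Subalgebra.centralizer_coe_image_includeLeft_eq_center_tensorProduct]
  exact Set.mem_centralizer_image_iff Φ.toMulEquiv _ g

end TensorProduct

/-- Let `W1` be a finite-dimensional simple `F[H1]`-module and `W2` a finite-dimensional
absolutely simple `F[H2]`-module, and let `D = End_{F[H1]}(W1)` (the endomorphisms of `W1`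
commuting with the `H1`-action), acting on `W1 ⊗[F] W2` through the first factor. Then the
image of the natural `F`-algebra homomorphism `F[H1 × H2] → End_F(W1 ⊗[F] W2)` — i.e. the
`F`-span of the operators `τ1 h1 ⊗ τ2 h2` — coincides with `End_D(W1 ⊗[F] W2)`, the ring of
`D`-linear endomorphisms of `W1 ⊗[F] W2`. -/
theorem group_algebra_image_eq_commutant_endomorphisms {F : Type u} [Field F]
    {H1 : Type v} [Group H1] {H2 : Type w} [Group H2]
    {W1 : Type x} [AddCommGroup W1] [Module F W1] [FiniteDimensional F W1]
    {W2 : Type y} [AddCommGroup W2] [Module F W2] [FiniteDimensional F W2]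
    (τ1 : Representation F H1 W1) (τ2 : Representation F H2 W2)
    (hτ1 : RepIsIrreducible τ1) (hτ2 : RepIsAbsolutelyIrreducible τ2) :
    (↑(Submodule.span F {g : (W1 ⊗[F] W2) →ₗ[F] (W1 ⊗[F] W2) |
        ∃ (h1 : H1) (h2 : H2), g = TensorProduct.map (τ1 h1) (τ2 h2)}) : Set _) =
      {g : (W1 ⊗[F] W2) →ₗ[F] (W1 ⊗[F] W2) |
        ∀ d : W1 →ₗ[F] W1, (∀ h1 : H1, d ∘ₗ τ1 h1 = τ1 h1 ∘ₗ d) →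
          g ∘ₗ TensorProduct.map d LinearMap.id = TensorProduct.map d LinearMap.id ∘ₗ g} := by
  have hgen : {g : (W1 ⊗[F] W2) →ₗ[F] (W1 ⊗[F] W2) |
      ∃ (h1 : H1) (h2 : H2), g = TensorProduct.map (τ1 h1) (τ2 h2)} =
      Set.image2 (TensorProduct.mapBilinear (.id F) W1 W2 W1 W2 · ·)
        (Set.range τ1) (Set.range τ2) := by
    ext g
    simp [eq_comm]
  rw [hgen, ← Submodule.map₂_span_span, hτ2.span_range_eq_top,
    hτ1.span_range_eq_centralizer_centralizer, ← TensorProduct.centralizer_image_map_id]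
  ext g
  simp only [Set.mem_centralizer_iff, Set.forall_mem_image, Subalgebra.coe_centralizer,
    Set.forall_mem_range, Module.End.mul_eq_comp]
  exact forall_congr' fun d => imp_congr (forall_congr' fun _ => eq_comm) eq_comm
end
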